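/- Let ν be Lebesgue measure on [-1,1], normalized to be a probability measure. Suppose (F_i)_{i ∈ A} is a finite family of measurable subsets of [-1,1] indexed by a finite set A ⊂ ℕ, and (𝓡_i)_{i ∈ A} are finite families of pairwise disjoint intervals, such that: for every i ∈ A and every interval J ∈ 𝓡_i, ν(J ∩ F_i)/ν(J) ≤ a, and moreover for i < j in A every interval of 𝓡_j meeting ⋂_{k ∈ A, k ≤ i} (F_k ∩ ⋃_{J ∈ 𝓡_k} J) is contained in ⋂_{k ∈ A, k < j} (F_k ∩ ⋃_{J ∈ 𝓡_k} J). Then ν(⋂_{i ∈ A} (F_i ∩ ⋃_{J ∈ 𝓡_i} J)) ≤ a^{|A|}. -/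
import Mathlib


open MeasureTheory
open scoped ENNReal

/-- Normalized Lebesgue measure on `[-1,1]`. -/
noncomputable def nuMeas : Measure ℝ := (2 : ℝ≥0∞)⁻¹ • volume.restrict (Set.Icc (-1 : ℝ) 1)

private lemma nuMeas_univ : nuMeas Set.univ = 1 := by
  simp [nuMeas, Real.volume_Icc]
  norm_num
  rw [show ((2:ℝ≥0∞)) = ENNReal.ofReal 2 by simp]
  exact ENNReal.inv_mul_cancel (by simp) ENNReal.ofReal_ne_top

private lemma indep_aux (a : ℝ) (ha : a ∈ Set.Ioo (0 : ℝ) 1) :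
    ∀ (A : Finset ℕ) (F : ℕ → Set ℝ) (R : ℕ → Finset (Set ℝ)),
    (∀ i ∈ A, ∀ J ∈ R i, ∃ x y : ℝ, J = Set.Icc x y) →
    (∀ i ∈ A, ((R i : Set (Set ℝ))).Pairwise Disjoint) →
    (∀ i ∈ A, ∀ J ∈ R i, nuMeas (J ∩ F i) ≤ ENNReal.ofReal a * nuMeas J) →
    (∀ i ∈ A, ∀ j ∈ A, i < j → ∀ J ∈ R j,
      (J ∩ ⋂ k ∈ A, ⋂ (_ : k ≤ i), (F k ∩ ⋃ J' ∈ R k, J')).Nonempty →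
        J ⊆ ⋂ k ∈ A, ⋂ (_ : k < j), (F k ∩ ⋃ J' ∈ R k, J')) →
    nuMeas (⋂ i ∈ A, (F i ∩ ⋃ J ∈ R i, J)) ≤ ENNReal.ofReal a ^ A.card := by
  intro A
  induction A using Finset.strongInduction with
  | _ A ih =>
  intro F R hint hdisj hratio hnest
  rcases A.eq_empty_or_nonempty with rfl | hA
  · simpa using nuMeas_univ.le
  · set M := A.max' hA with hMdef
    have hM : M ∈ A := A.max'_mem hA
    set A' := A.erase M with hA'def
    have hsub : A' ⊂ A := Finset.erase_ssubset hM
    have hlt : ∀ k ∈ A', k < M := fun k hk =>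
      lt_of_le_of_ne (A.le_max' k (Finset.mem_of_mem_erase hk)) (Finset.ne_of_mem_erase hk)
    set S : ℕ → Set ℝ := fun k => F k ∩ ⋃ J' ∈ R k, J' with hSdef
    set T : Set ℝ := ⋂ i ∈ A, S i with hTdef
    set T' : Set ℝ := ⋂ i ∈ A', S i with hT'def
    -- intersections with a predicate forcing `k < M` don't see `M`
    have hEq : ∀ (P : ℕ → Prop), (∀ k, P k → k < M) →
        (⋂ k ∈ A, ⋂ (_ : P k), S k) = (⋂ k ∈ A', ⋂ (_ : P k), S k) := by
      intro P hP
      ext x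
      simp only [Set.mem_iInter, Finset.mem_erase, hA'def]
      constructor
      · rintro h k ⟨-, hk2⟩ hPk; exact h k hk2 hPk
      · intro h k hk hPk; exact h k ⟨(hP k hPk).ne, hk⟩ hPk
    -- the inner intersection over A' with the redundant `k < M`
    have hEq2 : (⋂ k ∈ A', ⋂ (_ : k < M), S k) = T' := by
      ext x
      simp only [Set.mem_iInter, hT'def]
      exact ⟨fun h k hk => h k hk (hlt k hk), fun h k hk _ => h k hk⟩
    -- key nesting claim
    have hJT' : ∀ J ∈ R M, (J ∩ T).Nonempty → J ⊆ T' := by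
      intro J hJ hne
      rcases A'.eq_empty_or_nonempty with hA'e | hA'ne
      · rw [hT'def, hA'e]; simp
      · set i := A'.max' hA'ne with hidef
        have hiA' : i ∈ A' := A'.max'_mem hA'ne
        have hiA : i ∈ A := Finset.mem_of_mem_erase hiA'
        have hiM : i < M := hlt i hiA'
        have hTsub : T ⊆ ⋂ k ∈ A, ⋂ (_ : k ≤ i), S k := by
          intro x hx
          rw [hTdef] at hx
          simp only [Set.mem_iInter] at hx ⊢
          intro k hk _; exact hx k hk
        have hne' : (J ∩ ⋂ k ∈ A, ⋂ (_ : k ≤ i), S k).Nonempty :=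
          hne.mono (Set.inter_subset_inter_right J hTsub)
        have := hnest i hiA M hM hiM J hJ hne'
        rw [hEq (· < M) (fun k h => h), hEq2] at this
        exact this
    -- the good intervals
    have hTS : T ⊆ S M := Set.biInter_subset_of_mem hM
    classical
    set G := (R M).filter (fun J => (J ∩ T).Nonempty) with hGdef
    have hTsubG : T ⊆ ⋃ J ∈ G, (J ∩ F M) := by
      intro x hx
      have hxSM : x ∈ S M := hTS hx
      obtain ⟨hxF, hxU⟩ := hxSM
      simp only [Set.mem_iUnion] at hxU
      obtain ⟨J, hJ, hxJ⟩ := hxU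
      have hJG : J ∈ G := by
        rw [hGdef, Finset.mem_filter]
        exact ⟨hJ, ⟨x, hxJ, hx⟩⟩
      exact Set.mem_biUnion hJG ⟨hxJ, hxF⟩
    have hmeasJ : ∀ J ∈ R M, MeasurableSet J := by
      intro J hJ
      obtain ⟨x, y, rfl⟩ := hint M hM J hJ
      exact measurableSet_Icc
    have hGsubT' : (⋃ J ∈ G, J) ⊆ T' := by
      intro x hx
      simp only [Set.mem_iUnion] at hx
      obtain ⟨J, hJ, hxJ⟩ := hx
      rw [hGdef, Finset.mem_filter] at hJ
      exact hJT' J hJ.1 hJ.2 hxJ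
    have hdisjG : ((G : Set (Set ℝ))).PairwiseDisjoint id :=
      (hdisj M hM).mono (by rw [hGdef]; exact_mod_cast Finset.filter_subset _ _)
    have hsum : ∑ J ∈ G, nuMeas J = nuMeas (⋃ J ∈ G, J) :=
      (measure_biUnion_finset hdisjG
        (fun J hJ => hmeasJ J (Finset.mem_of_mem_filter J hJ))).symm
    have hIH : nuMeas T' ≤ ENNReal.ofReal a ^ A'.card := by
      refine ih A' hsub F R ?_ ?_ ?_ ?_
      · exact fun i hi => hint i (Finset.mem_of_mem_erase hi)
      · exact fun i hi => hdisj i (Finset.mem_of_mem_erase hi)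
      · exact fun i hi => hratio i (Finset.mem_of_mem_erase hi)
      · intro i hi j hj hij J hJ hne
        have hiM : i < M := hlt i hi
        have hjM : j < M := hlt j hj
        rw [← hEq (· ≤ i) (fun k hk => lt_of_le_of_lt hk hiM)] at hne
        have := hnest i (Finset.mem_of_mem_erase hi) j (Finset.mem_of_mem_erase hj) hij J hJ hne
        rwa [hEq (· < j) (fun k hk => hk.trans hjM)] at this
    have hcard : A.card = A'.card + 1 := by
      rw [hA'def, Finset.card_erase_of_mem hM]
      have : 1 ≤ A.card := Finset.card_pos.mpr hA
      omega
    calc nuMeas T ≤ nuMeas (⋃ J ∈ G, (J ∩ F M)) := measure_mono hTsubG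
      _ ≤ ∑ J ∈ G, nuMeas (J ∩ F M) := measure_biUnion_finset_le _ _
      _ ≤ ∑ J ∈ G, ENNReal.ofReal a * nuMeas J :=
          Finset.sum_le_sum (fun J hJ => hratio M hM J (Finset.mem_of_mem_filter J hJ))
      _ = ENNReal.ofReal a * ∑ J ∈ G, nuMeas J := by rw [Finset.mul_sum]
      _ = ENNReal.ofReal a * nuMeas (⋃ J ∈ G, J) := by rw [hsum]
      _ ≤ ENNReal.ofReal a * nuMeas T' := by
          exact mul_le_mul_right (measure_mono hGsubT') _
      _ ≤ ENNReal.ofReal a * ENNReal.ofReal a ^ A'.card := mul_le_mul_right hIH _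
      _ = ENNReal.ofReal a ^ A.card := by rw [hcard, pow_succ]; ring

/-- abstract independence lemma. Conditional measure bounds on families of
    disjoint intervals, together with the nesting property across scales, give the
    multiplicative bound `ν(⋂_{i∈A} (F_i ∩ ⋃ 𝓡_i)) ≤ a^{|A|}`. -/
theorem independence_lemma (a : ℝ) (ha : a ∈ Set.Ioo (0 : ℝ) 1)
    (A : Finset ℕ) (F : ℕ → Set ℝ) (R : ℕ → Finset (Set ℝ))
    (hF : ∀ i ∈ A, MeasurableSet (F i) ∧ F i ⊆ Set.Icc (-1 : ℝ) 1)
    (hint : ∀ i ∈ A, ∀ J ∈ R i, ∃ x y : ℝ, J = Set.Icc x y)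
    (hdisj : ∀ i ∈ A, ((R i : Set (Set ℝ))).Pairwise Disjoint)
    (hratio : ∀ i ∈ A, ∀ J ∈ R i, nuMeas (J ∩ F i) ≤ ENNReal.ofReal a * nuMeas J)
    (hnest : ∀ i ∈ A, ∀ j ∈ A, i < j → ∀ J ∈ R j,
      (J ∩ ⋂ k ∈ A, ⋂ (_ : k ≤ i), (F k ∩ ⋃ J' ∈ R k, J')).Nonempty →
        J ⊆ ⋂ k ∈ A, ⋂ (_ : k < j), (F k ∩ ⋃ J' ∈ R k, J')) :
    nuMeas (⋂ i ∈ A, (F i ∩ ⋃ J ∈ R i, J)) ≤ ENNReal.ofReal a ^ A.card :=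
  indep_aux a ha A F R hint hdisj hratio hnest
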